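/- arXiv:2303.04531 — 4 statements merged into one kernel-verified Lean document; each statement's English description precedes it below -/
import Mathlib

section
/- Let A = {a_1 < a_2 < ...} be a subset of the positive integers satisfying 2a_{s-1} + 4a_{s-2} + 6a_{s-3} + ... + 2(s-1)a_1 < a_s for all s ≥ 2. Then for all positive integers m and n, the number P(m,n,A) of partitions of m into at most n parts, all of which lie in A, is at most the n-th Fibonacci number F(n). -/
/-!
Write `parts a j m n` for the partitions of `m` into at most `n` parts taken from
`a 0, …, a (j - 1)`, and `T_j(e) = threshold a j e = ∑_{t<j} (e + 2t)·a_{j-1-t}`, so that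
`T_{j+1}(e) = e·a_j + T_j(e + 2)` and the growth condition says `T_j(2) < a_j`. By induction on `j`
we show at once that `parts a j m n` has at most `F(n)` elements when `m ≥ 1`, and at most
`F(n - e)` elements when `m > T_j(e)`.

For the step, sort the partitions with parts up to `a_j` by the multiplicity `c` of `a_j`:
removing these `c` parts leaves a partition of `m - c·a_j` into at most `n - c` smaller parts.
With `q = ⌊m / a_j⌋`, a class `c < q` has remainder `m - c·a_j ≥ (q - c)·a_j > T_j(2(q - c))`, so
it has at most `F(n - 2q + c)` elements, and these bounds add up to less than `F(n - q + 1)`;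
the class `c = q` is bounded by the first statement, or by `1` when `m = q·a_j`. If
`m > T_{j+1}(e)` but `q ≤ e + 1`, the classes `c ≤ e` are controlled instead by
`m - c·a_j > T_j(3e + 2 - 2c)`.
-/

open Finset
open Nat (fib fib_add_two fib_mono fib_pos fib_one fib_zero)

namespace RestrictedPartition

theorem fib_sub_two_add_fib_sub_one_le (y : ℕ) : fib (y - 2) + fib (y - 1) ≤ fib y := by
  rcases y with _ | _ | y
  · simp
  · simp
  · simp [fib_add_two]

theorem sum_range_fib_sub_add_fib (x r : ℕ) :
    ∑ c ∈ range r, fib (x - (r - c)) + fib (x - r + 1) = fib (x + 1) := by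
  induction r with
  | zero => simp
  | succ r ih =>
    have hstep : fib (x - (r + 1)) + fib (x - (r + 1) + 1) = fib (x - r + 1) := by
      rcases le_or_gt x r with h | h
      · simp [Nat.sub_eq_zero_of_le h, Nat.sub_eq_zero_of_le (h.trans r.le_succ)]
      · rw [show x - r + 1 = x - (r + 1) + 2 by omega, fib_add_two]
    rw [sum_range_succ', ← ih, ← hstep]
    simp only [Nat.add_sub_add_right, Nat.sub_zero]
    ring

theorem sum_range_fib_sub_le {e : ℕ} (he : 1 ≤ e) (n : ℕ) :
    ∑ c ∈ range (e + 1), fib (n - (3 * e + 2 - c)) ≤ fib (n - (e + 2)) := by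
  induction e, he using Nat.le_induction generalizing n with
  | base =>
    simpa [sum_range_succ, Nat.sub_sub, add_comm] using fib_sub_two_add_fib_sub_one_le (n - 3)
  | succ e he ih =>
    rw [sum_range_succ]
    have hshift : ∀ c ∈ range (e + 1),
        fib (n - (3 * (e + 1) + 2 - c)) = fib (n - 3 - (3 * e + 2 - c)) := by
      intro c hc
      rw [mem_range] at hc
      congr 1
      omega
    rw [sum_congr rfl hshift]
    calc _ ≤ fib (n - 3 - (e + 2)) + fib (n - (e + 4)) :=
          Nat.add_le_add (ih _) (fib_mono (by omega))
      _ = fib (n - (e + 3) - 2) + fib (n - (e + 3) - 1) := by congr 2; omega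
      _ ≤ fib (n - (e + 1 + 2)) := fib_sub_two_add_fib_sub_one_le _

variable (a : ℕ → ℕ)

def threshold (j e : ℕ) : ℕ := ∑ t ∈ range j, (e + 2 * t) * a (j - 1 - t)

variable {a}

theorem threshold_zero (e : ℕ) : threshold a 0 e = 0 := sum_range_zero _

theorem threshold_succ (k e : ℕ) : threshold a (k + 1) e = e * a k + threshold a k (e + 2) := by
  rw [threshold, sum_range_succ', add_comm, threshold]
  simp only [Nat.add_sub_cancel, Nat.sub_zero, mul_zero, add_zero]
  congr 1
  refine sum_congr rfl fun t _ => ?_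
  rw [show k - (t + 1) = k - 1 - t by omega]
  ring

theorem threshold_add_two_mul_le (k f r : ℕ) :
    threshold a k (f + 2 * r) ≤ threshold a k f + r * threshold a k 2 := by
  simp only [threshold, mul_sum, ← sum_add_distrib]
  refine sum_le_sum fun t _ => ?_
  calc (f + 2 * r + 2 * t) * a (k - 1 - t) ≤ (f + 2 * t + r * (2 + 2 * t)) * a (k - 1 - t) :=
        Nat.mul_le_mul_right _ (by nlinarith)
    _ = _ := by ring

theorem threshold_two_mul_lt {k r : ℕ} (hk : threshold a k 2 < a k) (hr : 1 ≤ r) :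
    threshold a k (2 * r) < r * a k :=
  calc threshold a k (2 * r) = threshold a k (2 + 2 * (r - 1)) := by congr 1; omega
    _ ≤ threshold a k 2 + (r - 1) * threshold a k 2 := threshold_add_two_mul_le k 2 (r - 1)
    _ = (1 + (r - 1)) * threshold a k 2 := by ring
    _ = r * threshold a k 2 := by rw [Nat.add_sub_cancel' hr]
    _ < r * a k := Nat.mul_lt_mul_of_pos_left hk hr

theorem threshold_two_lt (hpos : 0 < a 0)
    (hgrow : ∀ s : ℕ, 1 ≤ s → ∑ t ∈ Finset.Icc 1 s, 2 * t * a (s - t) < a s) (k : ℕ) :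
    threshold a k 2 < a k := by
  rcases k with _ | k
  · rwa [threshold_zero]
  · convert hgrow (k + 1) (by omega) using 1
    rw [threshold, ← Ico_add_one_right_eq_Icc, sum_Ico_eq_sum_range]
    refine sum_congr rfl fun t _ => ?_
    rw [show k + 1 - 1 - t = k + 1 - (1 + t) by omega]
    ring

open Finsupp (weight degree single)

variable (a) in
def parts (j m n : ℕ) : Set (ℕ →₀ ℕ) :=
  {x | weight a x = m ∧ degree x ≤ n ∧ x.support ⊆ range j}

theorem parts_finite (j m n : ℕ) : (parts a j m n).Finite := by
  refine ((range (n + 1)).finite_toSet.biUnion fun d _ =>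
    (finsuppAntidiag (range j) d).finite_toSet).subset ?_
  rintro x ⟨-, hdeg, hsupp⟩
  simp only [Set.mem_iUnion, mem_coe, mem_range, mem_finsuppAntidiag]
  exact ⟨degree x, by omega,
    (sum_subset hsupp fun i _ hi => Finsupp.notMem_support_iff.mp hi).symm, hsupp⟩

theorem support_subset_range_weight (ha : StrictMono a) (x : ℕ →₀ ℕ) :
    x.support ⊆ range (weight a x + 1) := fun _ hi =>
  mem_range.mpr (Nat.lt_succ_of_le
    (ha.le_apply.trans (Finsupp.le_weight_of_ne_zero' a (Finsupp.mem_support_iff.mp hi))))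

theorem parts_zero_eq_empty {m : ℕ} (hm : m ≠ 0) (n : ℕ) : parts a 0 m n = ∅ := by
  refine Set.eq_empty_of_forall_notMem ?_
  rintro x ⟨hw, -, hsupp⟩
  rw [range_zero, subset_empty, Finsupp.support_eq_empty] at hsupp
  simp [hsupp, hm.symm] at hw

theorem weight_le_degree_mul (hmono : Monotone a) {k : ℕ} {x : ℕ →₀ ℕ}
    (hx : x.support ⊆ range (k + 1)) : weight a x ≤ degree x * a k := by
  rw [Finsupp.weight_apply, Finsupp.sum, Finsupp.degree_apply, sum_mul]
  refine sum_le_sum fun i hi => Nat.mul_le_mul_left _ (hmono ?_)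
  have := mem_range.mp (hx hi)
  omega

theorem parts_succ_eq_empty (hmono : Monotone a) {k m n : ℕ} (h : n * a k < m) :
    parts a (k + 1) m n = ∅ := by
  refine Set.eq_empty_of_forall_notMem ?_
  rintro x ⟨hw, hdeg, hsupp⟩
  have := weight_le_degree_mul hmono hsupp
  have := Nat.mul_le_mul_right (a k) hdeg
  omega

theorem ncard_parts_zero_le_one (hapos : ∀ i, 0 < a i) (j n : ℕ) : (parts a j 0 n).ncard ≤ 1 := by
  have hsub : parts a j 0 n ⊆ {0} := by
    rintro x ⟨hw, -, -⟩
    ext i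
    by_contra hi
    have := Finsupp.le_weight_of_ne_zero' a hi
    have := hapos i
    omega
  simpa using Set.ncard_le_ncard hsub

theorem ncard_parts_succ_le_sum {k m n r : ℕ} (h : m < (r + 1) * a k) :
    (parts a (k + 1) m n).ncard ≤ ∑ c ∈ range (r + 1), (parts a k (m - c * a k) (n - c)).ncard := by
  have hsub : parts a (k + 1) m n ⊆
      ⋃ c ∈ range (r + 1), (· + single k c) '' parts a k (m - c * a k) (n - c) := by
    rintro x ⟨hw, hdeg, hsupp⟩
    have hx : x.erase k + single k (x k) = x := Finsupp.erase_add_single k x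
    have hw' : weight a (x.erase k) + x k * a k = m := by
      rw [← hw, ← hx, map_add, Finsupp.weight_single, smul_eq_mul, Finsupp.erase_add_single]
    have hdeg' : degree (x.erase k) + x k = degree x := by
      rw [← Finsupp.degree_single k (x k), ← map_add, hx]
    have hxk : x k < r + 1 := by nlinarith
    refine Set.mem_biUnion (mem_range.mpr hxk) ⟨x.erase k, ⟨by omega, by omega, ?_⟩, hx⟩
    intro i hi
    rw [Finsupp.support_erase, mem_erase] at hi
    have := mem_range.mp (hsupp hi.2)
    exact mem_range.mpr (by omega)
  calc (parts a (k + 1) m n).ncard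
      ≤ (⋃ c ∈ range (r + 1), (· + single k c) '' parts a k (m - c * a k) (n - c)).ncard :=
        Set.ncard_le_ncard hsub ((range (r + 1)).finite_toSet.biUnion
          fun c _ => (parts_finite _ _ _).image _)
    _ ≤ ∑ c ∈ range (r + 1), ((· + single k c) '' parts a k (m - c * a k) (n - c)).ncard :=
        set_ncard_biUnion_le _ _
    _ = _ := sum_congr rfl fun c _ => Set.ncard_image_of_injective _ (add_left_injective _)

variable (a) in
def FibBound (j : ℕ) : Prop :=
  ∀ n m, 1 ≤ m → (parts a j m n).ncard ≤ fib n

variable (a) in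
def ThresholdFibBound (j : ℕ) : Prop :=
  ∀ n e m, 1 ≤ e → threshold a j e < m → (parts a j m n).ncard ≤ fib (n - e)

theorem ncard_parts_le_max_fib (hapos : ∀ i, 0 < a i) {k : ℕ} (hP : FibBound a k) (u n : ℕ) :
    (parts a k u n).ncard ≤ max (fib n) 1 := by
  rcases Nat.eq_zero_or_pos u with rfl | hu
  · exact (ncard_parts_zero_le_one hapos k n).trans (le_max_right _ _)
  · exact (hP n u hu).trans (le_max_left _ _)

theorem ncard_parts_sub_mul_le_fib_of_lt {k : ℕ} (hk : threshold a k 2 < a k)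
    (hA : ThresholdFibBound a k) {c q m : ℕ} (hc : c < q) (hq : q * a k ≤ m) (n : ℕ) :
    (parts a k (m - c * a k) (n - c)).ncard ≤ fib (n - (2 * q - c)) := by
  have hlt : threshold a k (2 * (q - c)) < m - c * a k :=
    calc threshold a k (2 * (q - c)) < (q - c) * a k := threshold_two_mul_lt hk (by omega)
      _ ≤ m - c * a k := by rw [Nat.sub_mul]; omega
  calc _ ≤ fib (n - c - 2 * (q - c)) := hA _ _ _ (by omega) hlt
    _ = fib (n - (2 * q - c)) := by congr 1; omega

theorem ncard_parts_sub_mul_le_fib_of_le {k : ℕ} (hk : threshold a k 2 < a k)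
    (hA : ThresholdFibBound a k) {c e m : ℕ} (hc : c ≤ e)
    (hm : e * a k + threshold a k (e + 2) < m) (n : ℕ) :
    (parts a k (m - c * a k) (n - c)).ncard ≤ fib (n - (3 * e + 2 - c)) := by
  have hlt : threshold a k (e + 2 + 2 * (e - c)) < m - c * a k :=
    calc threshold a k (e + 2 + 2 * (e - c))
        ≤ threshold a k (e + 2) + (e - c) * threshold a k 2 := threshold_add_two_mul_le _ _ _
      _ ≤ threshold a k (e + 2) + (e - c) * a k := by gcongr
      _ < m - c * a k := by
        have : (e - c) * a k + c * a k = e * a k := by rw [← add_mul, Nat.sub_add_cancel hc]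
        omega
  calc _ ≤ fib (n - c - (e + 2 + 2 * (e - c))) := hA _ _ _ (by omega) hlt
    _ = fib (n - (3 * e + 2 - c)) := by congr 1; omega

theorem ncard_parts_succ_le_fib_sub (hmono : Monotone a) (hapos : ∀ i, 0 < a i) {k : ℕ}
    (hk : threshold a k 2 < a k) (hA : ThresholdFibBound a k) (hP : FibBound a k)
    {q m : ℕ} (hq : 1 ≤ q) (hqm : q * a k ≤ m) (hmq : m < (q + 1) * a k) (n : ℕ) :
    (parts a (k + 1) m n).ncard ≤ fib (n - (q - 2)) := by
  -- for `q = 1` the truncated `q - 2` vanishes and the bound is `F(n)`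
  rcases lt_or_ge n q with hnq | hnq
  · rw [parts_succ_eq_empty hmono (by nlinarith)]
    simp
  have hsplit := ncard_parts_succ_le_sum (n := n) hmq
  rw [sum_range_succ] at hsplit
  have hlow : ∑ c ∈ range q, (parts a k (m - c * a k) (n - c)).ncard + fib (n - q - q + 1)
      ≤ fib (n - q + 1) := by
    rw [← sum_range_fib_sub_add_fib (n - q) q]
    gcongr with c hc
    calc _ ≤ fib (n - (2 * q - c)) := ncard_parts_sub_mul_le_fib_of_lt hk hA (mem_range.mp hc) hqm n
      _ = fib (n - q - (q - c)) := by have := mem_range.mp hc; congr 1; omega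
  have htop := ncard_parts_le_max_fib hapos hP (m - q * a k) (n - q)
  rcases hnq.eq_or_lt with rfl | hlt
  · simp only [Nat.sub_self, Nat.zero_sub, zero_add, fib_one, fib_zero] at hsplit hlow htop
    have : 1 ≤ fib (q - (q - 2)) := fib_pos.mpr (by omega)
    omega
  · rw [max_eq_left (fib_pos.mpr (by omega))] at htop
    have hfib : fib (n - q + 2) = fib (n - q) + fib (n - q + 1) := fib_add_two
    rcases hq.eq_or_lt with rfl | hq2
    · rw [show n - 1 - 1 + 1 = n - 1 by omega, show n - 1 + 1 = n by omega] at hlow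
      simp only [Nat.sub_zero, show 1 - 2 = 0 from rfl]
      omega
    · rw [show n - (q - 2) = n - q + 2 by omega]
      omega

theorem fibBound_succ (hmono : Monotone a) (hapos : ∀ i, 0 < a i) {k : ℕ}
    (hk : threshold a k 2 < a k) (hA : ThresholdFibBound a k) (hP : FibBound a k) :
    FibBound a (k + 1) := by
  intro n m hm
  have hqm : m / a k * a k ≤ m := Nat.div_mul_le_self m (a k)
  have hmq : m < (m / a k + 1) * a k := by
    rw [add_one_mul]; exact Nat.lt_div_mul_add (hapos k)
  rcases Nat.eq_zero_or_pos (m / a k) with hq | hq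
  · calc _ ≤ _ := ncard_parts_succ_le_sum (n := n) (hq ▸ hmq)
      _ ≤ fib n := by simpa using hP n m hm
  · exact (ncard_parts_succ_le_fib_sub hmono hapos hk hA hP hq hqm hmq n).trans
      (fib_mono (Nat.sub_le _ _))

theorem thresholdFibBound_succ (hmono : Monotone a) (hapos : ∀ i, 0 < a i) {k : ℕ}
    (hk : threshold a k 2 < a k) (hA : ThresholdFibBound a k) (hP : FibBound a k) :
    ThresholdFibBound a (k + 1) := by
  intro n e m he hm
  rw [threshold_succ] at hm
  rcases le_or_gt n e with hne | hen
  · rw [parts_succ_eq_empty hmono (by nlinarith)]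
    simp
  rcases lt_or_ge m ((e + 1 + 1) * a k) with hsmall | hlarge
  · have hlow : ∑ c ∈ range (e + 1), (parts a k (m - c * a k) (n - c)).ncard
        ≤ fib (n - (e + 2)) :=
      (sum_le_sum fun c hc => ncard_parts_sub_mul_le_fib_of_le hk hA
        (Nat.lt_succ_iff.mp (mem_range.mp hc)) hm n).trans (sum_range_fib_sub_le he n)
    have htop := ncard_parts_le_max_fib hapos hP (m - (e + 1) * a k) (n - (e + 1))
    have hsplit := ncard_parts_succ_le_sum (n := n) hsmall
    rw [sum_range_succ] at hsplit
    obtain rfl | hlt : n = e + 1 ∨ e + 1 < n := by omega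
    · rw [show e + 1 - (e + 2) = 0 by omega, fib_zero] at hlow
      rw [Nat.sub_self, fib_zero, max_eq_right zero_le_one] at htop
      rw [Nat.sub_self] at hsplit
      rw [Nat.add_sub_cancel_left, fib_one]
      omega
    · rw [max_eq_left (fib_pos.mpr (by omega))] at htop
      have := fib_sub_two_add_fib_sub_one_le (n - e)
      rw [show n - e - 2 = n - (e + 2) by omega, show n - e - 1 = n - (e + 1) by omega] at this
      omega
  · have hq : e + 2 ≤ m / a k := (Nat.le_div_iff_mul_le (hapos k)).mpr hlarge
    have hmq : m < (m / a k + 1) * a k := by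
      rw [add_one_mul]; exact Nat.lt_div_mul_add (hapos k)
    exact (ncard_parts_succ_le_fib_sub hmono hapos hk hA hP (by omega)
      (Nat.div_mul_le_self m (a k)) hmq n).trans (fib_mono (by omega))

theorem fibBound_and_thresholdFibBound (ha : StrictMono a) (hpos : 0 < a 0)
    (hgrow : ∀ s : ℕ, 1 ≤ s → ∑ t ∈ Finset.Icc 1 s, 2 * t * a (s - t) < a s) :
    ∀ j, FibBound a j ∧ ThresholdFibBound a j
  | 0 =>
    ⟨fun n m hm => by simp [parts_zero_eq_empty (Nat.one_le_iff_ne_zero.mp hm)],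
      fun n e m _ hm => by rw [threshold_zero] at hm; simp [parts_zero_eq_empty hm.ne']⟩
  | k + 1 =>
    have hapos : ∀ i, 0 < a i := fun i => hpos.trans_le (ha.monotone i.zero_le)
    have hk := threshold_two_lt hpos hgrow k
    let ⟨hP, hA⟩ := fibBound_and_thresholdFibBound ha hpos hgrow k
    ⟨fibBound_succ ha.monotone hapos hk hA hP, thresholdFibBound_succ ha.monotone hapos hk hA hP⟩

end RestrictedPartition

theorem restricted_partitions_le_fib_general
    (a : ℕ → ℕ) (ha : StrictMono a) (hpos : 0 < a 0)
    (hgrow : ∀ s : ℕ, 1 ≤ s → ∑ t ∈ Finset.Icc 1 s, 2 * t * a (s - t) < a s)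
    (m n : ℕ) (hm : 1 ≤ m) :
    Set.ncard {x : ℕ →₀ ℕ |
        x.sum (fun i c => c * a i) = m ∧ x.sum (fun _ c => c) ≤ n} ≤ Nat.fib n := by
  have hset : {x : ℕ →₀ ℕ | x.sum (fun i c => c * a i) = m ∧ x.sum (fun _ c => c) ≤ n}
      = RestrictedPartition.parts a (m + 1) m n := by
    ext x
    refine ⟨fun ⟨hw, hdeg⟩ => ⟨hw, hdeg, ?_⟩, fun ⟨hw, hdeg, _⟩ => ⟨hw, hdeg⟩⟩
    exact hw ▸ RestrictedPartition.support_subset_range_weight ha x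
  rw [hset]
  exact (RestrictedPartition.fibBound_and_thresholdFibBound ha hpos hgrow (m + 1)).1 n m hm

/-- `a 0 < a 1 < ⋯` enumerates the set `A`; `a s` is the element `a_{s+1}` of the paper.
The growth condition reads: for every `s ≥ 1`,
`2·a_{s-1} + 4·a_{s-2} + ⋯ + 2s·a_0 < a_s`. -/
theorem restricted_partitions_le_fib
    (a : ℕ → ℕ) (ha : StrictMono a) (hpos : 0 < a 0)
    (hgrow : ∀ s : ℕ, 1 ≤ s → ∑ t ∈ Finset.Icc 1 s, 2 * t * a (s - t) < a s)
    (m n : ℕ) (hm : 1 ≤ m) (hn : 1 ≤ n) :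
    Set.ncard {x : ℕ →₀ ℕ |
        x.sum (fun i c => c * a i) = m ∧ x.sum (fun _ c => c) ≤ n} ≤ Nat.fib n :=
  restricted_partitions_le_fib_general a ha hpos hgrow m n hm
end

section
/- Let q ≥ 4 be an integer and A_q = {q^i : i ∈ ℕ} the set of powers of q. Then for all positive integers m and n, the number of partitions of m into at most n parts, each a power of q, is at most F(n). -/
/-!
Write `P_ℓ(N, n)` for the partitions of `N` into at most `n` parts among `1, q, …, q ^ (ℓ - 1)`.
For `N ≥ 1` we show `#P_ℓ(N, n) ≤ F(n - 3 ⌊N / q ^ ℓ⌋)` by induction on `ℓ`; the theorem is the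
case `ℓ = m`. For the step put `A = ⌊N / q ^ ℓ⌋`, which is at most `n` as no part exceeds `q ^ ℓ`,
and sort the partitions by the multiplicity `a ≤ A` of the part `q ^ ℓ`. Removing these parts
lands in `P_ℓ(N - a q ^ ℓ, n - a)`, of size at most `F(n - 3A + 2a)` for `a < A` and at most
`max 1 F(n - A)` for `a = A` (nothing may be left). The sum is at most `F(n - A + 1)`, and
`A ≥ 1 + 3 ⌊A / q⌋` because `q ≥ 4`.
-/

open Finset Finsupp Nat

theorem Nat.fib_sub_two_add_fib_sub_one_le (k : ℕ) : fib (k - 2) + fib (k - 1) ≤ fib k := by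
  rcases k with _ | _ | k
  · simp
  · simp
  · simp [fib_add_two]

theorem Nat.sum_fib_sub_three_mul_le (A n : ℕ) :
    ∑ a ∈ range A, fib (n - a - 3 * (A - a)) ≤ fib (n - A - 1) := by
  induction A generalizing n with
  | zero => simp
  | succ A ih =>
    calc ∑ a ∈ range (A + 1), fib (n - a - 3 * (A + 1 - a))
        = ∑ a ∈ range A, fib (n - 3 - a - 3 * (A - a)) + fib (n - A - 3) := by
          rw [sum_range_succ]
          congr 1
          · refine sum_congr rfl fun a ha => ?_
            have := mem_range.mp ha
            congr 1
            omega
          · congr 1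
            omega
      _ ≤ fib (n - 3 - A - 1) + fib (n - A - 3) := by grw [ih]
      _ ≤ fib (n - (A + 1) - 1) := by
          have := fib_sub_two_add_fib_sub_one_le (n - (A + 1) - 1)
          rwa [show n - (A + 1) - 1 - 2 = n - 3 - A - 1 by omega,
            show n - (A + 1) - 1 - 1 = n - A - 3 by omega] at this

theorem Nat.sum_fib_sub_three_mul_add_max_le {q A n : ℕ} (hq : 4 ≤ q) (hA : 1 ≤ A) (hAn : A ≤ n) :
    ∑ a ∈ range A, fib (n - a - 3 * (A - a)) + max 1 (fib (n - A)) ≤ fib (n - 3 * (A / q)) := by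
  have hAq : 3 * (A / q) + 1 ≤ A := by
    have := Nat.div_mul_le_self A q
    have : 4 * (A / q) ≤ A / q * q := by rw [mul_comm]; exact Nat.mul_le_mul_left _ hq
    omega
  calc ∑ a ∈ range A, fib (n - a - 3 * (A - a)) + max 1 (fib (n - A))
      ≤ fib (n - A - 1) + max 1 (fib (n - A)) := by grw [sum_fib_sub_three_mul_le]
    _ ≤ fib (n - A + 1) := by
        rcases Nat.eq_zero_or_pos (n - A) with h | h
        · simp [h]
        · rw [max_eq_right (fib_pos.mpr h), fib_add_one h.ne']
    _ ≤ fib (n - 3 * (A / q)) := fib_mono (by omega)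

def qaryPartitionsBelow (q ℓ N n : ℕ) : Set (ℕ →₀ ℕ) :=
  {x | x.support ⊆ range ℓ ∧ weight (q ^ ·) x = N ∧ degree x ≤ n}

section

variable {q ℓ N n : ℕ}

theorem weight_pow_le_degree_mul (hq : 0 < q) {x : ℕ →₀ ℕ} (hx : x.support ⊆ range (ℓ + 1)) :
    weight (q ^ ·) x ≤ degree x * q ^ ℓ := by
  rw [weight_apply, degree_apply, Finsupp.sum, Finset.sum_mul]
  refine sum_le_sum fun i hi => ?_
  rw [smul_eq_mul]
  gcongr
  exact Nat.lt_succ_iff.mp (mem_range.mp (hx hi))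

theorem div_pow_le_of_mem_qaryPartitionsBelow_succ (hq : 0 < q) {x : ℕ →₀ ℕ}
    (hx : x ∈ qaryPartitionsBelow q (ℓ + 1) N n) : N / q ^ ℓ ≤ n := by
  obtain ⟨hsupp, hweight, hdeg⟩ := hx
  refine Nat.div_le_of_le_mul ?_
  calc N = weight (q ^ ·) x := hweight.symm
    _ ≤ degree x * q ^ ℓ := weight_pow_le_degree_mul hq hsupp
    _ ≤ q ^ ℓ * n := by rw [mul_comm]; gcongr

theorem qaryPartitionsBelow_zero_eq_empty (hN : N ≠ 0) : qaryPartitionsBelow q 0 N n = ∅ := by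
  refine Set.eq_empty_of_forall_notMem fun x ⟨hsupp, hweight, _⟩ => hN ?_
  rw [← hweight, support_eq_empty.mp (subset_empty.mp hsupp), map_zero]

theorem encard_qaryPartitionsBelow_sum_zero_le (hq : 0 < q) :
    (qaryPartitionsBelow q ℓ 0 n).encard ≤ 1 := by
  refine Set.encard_le_one_iff.mpr fun x y hx hy => ?_
  have eq_zero : ∀ z ∈ qaryPartitionsBelow q ℓ 0 n, z = 0 := fun z ⟨_, hz, _⟩ => by
    ext i
    by_contra hi
    have := le_weight_of_ne_zero' (q ^ ·) hi
    simp only [hz, nonpos_iff_eq_zero] at this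
    exact pow_ne_zero i hq.ne' this
  rw [eq_zero x hx, eq_zero y hy]

theorem qaryPartitionsBelow_succ_subset (hq : 0 < q) :
    qaryPartitionsBelow q (ℓ + 1) N n ⊆
      ⋃ a ∈ range (N / q ^ ℓ + 1),
        (· + single ℓ a) '' qaryPartitionsBelow q ℓ (N - q ^ ℓ * a) (n - a) := by
  rintro x ⟨hsupp, hweight, hdeg⟩
  have hx := erase_add_single ℓ x
  have hweight' : weight (q ^ ·) (x.erase ℓ) + x ℓ * q ^ ℓ = N := by
    rw [← hweight, ← hx, map_add, weight_single, smul_eq_mul, hx]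
  have hdeg' : degree (x.erase ℓ) + x ℓ ≤ n := by
    rwa [← degree_single ℓ (x ℓ), ← map_add, hx]
  refine Set.mem_biUnion (x := x ℓ) ?_ ⟨x.erase ℓ, ⟨?_, ?_, ?_⟩, hx⟩
  · rw [coe_range, Set.mem_Iio, Nat.lt_succ_iff, Nat.le_div_iff_mul_le (pow_pos hq ℓ)]
    omega
  · rw [support_erase, ← subset_insert_iff, ← range_add_one]
    exact hsupp
  · rw [mul_comm]
    omega
  · omega

theorem encard_qaryPartitionsBelow_succ_le (hq : 0 < q) :
    (qaryPartitionsBelow q (ℓ + 1) N n).encard ≤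
      ∑ a ∈ range (N / q ^ ℓ + 1), (qaryPartitionsBelow q ℓ (N - q ^ ℓ * a) (n - a)).encard :=
  (Set.encard_le_encard (qaryPartitionsBelow_succ_subset hq)).trans <|
    (set_encard_biUnion_le _ _).trans <| sum_le_sum fun _ _ => Set.encard_image_le _ _

theorem encard_qaryPartitionsBelow_le (hq : 4 ≤ q) (hN : N ≠ 0) :
    (qaryPartitionsBelow q ℓ N n).encard ≤ fib (n - 3 * (N / q ^ ℓ)) := by
  induction ℓ generalizing N n with
  | zero => simp [qaryPartitionsBelow_zero_eq_empty hN]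
  | succ ℓ ih =>
    have hq0 : 0 < q := by omega
    set A := N / q ^ ℓ with hA
    have hdiv : N / q ^ (ℓ + 1) = A / q := by rw [pow_succ, Nat.div_div_eq_div_mul]
    rcases (qaryPartitionsBelow q (ℓ + 1) N n).eq_empty_or_nonempty with hempty | ⟨x, hx⟩
    · simp [hempty]
    have hAn : A ≤ n := div_pow_le_of_mem_qaryPartitionsBelow_succ hq0 hx
    have hquot (a : ℕ) : (N - q ^ ℓ * a) / q ^ ℓ = A - a := Nat.sub_mul_div N (q ^ ℓ) a
    rcases Nat.eq_zero_or_pos A with hA0 | hA1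
    · have := encard_qaryPartitionsBelow_succ_le (ℓ := ℓ) (N := N) (n := n) hq0
      rw [← hA, hA0, zero_add, sum_range_one, mul_zero, Nat.sub_zero, Nat.sub_zero] at this
      simpa [hdiv, ← hA, hA0] using this.trans (ih hN)
    calc (qaryPartitionsBelow q (ℓ + 1) N n).encard
        ≤ ∑ a ∈ range (A + 1), (qaryPartitionsBelow q ℓ (N - q ^ ℓ * a) (n - a)).encard :=
          encard_qaryPartitionsBelow_succ_le hq0
      _ ≤ ∑ a ∈ range A, (fib (n - a - 3 * (A - a)) : ℕ∞) + (max 1 (fib (n - A)) : ℕ) := by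
          rw [sum_range_succ]
          gcongr with a ha
          · have hpos : 0 < (N - q ^ ℓ * a) / q ^ ℓ := by
              rw [hquot]
              exact Nat.sub_pos_of_lt (mem_range.mp ha)
            have hNa : N - q ^ ℓ * a ≠ 0 := by rintro h; simp [h] at hpos
            simpa [hquot] using ih hNa
          · rcases eq_or_ne (N - q ^ ℓ * A) 0 with hR | hR
            · rw [hR]
              exact (encard_qaryPartitionsBelow_sum_zero_le hq0).trans
                (by exact_mod_cast le_max_left _ _)
            · refine (ih hR).trans ?_
              simp [hquot]
      _ ≤ fib (n - 3 * (N / q ^ (ℓ + 1))) := by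
          rw [hdiv]
          exact_mod_cast sum_fib_sub_three_mul_add_max_le hq hA1 hAn

theorem support_subset_range_of_weight_pow_eq (hq : 1 < q) {x : ℕ →₀ ℕ}
    (hx : weight (q ^ ·) x = N) : x.support ⊆ range N := fun i hi => by
  have := le_weight_of_ne_zero' (q ^ ·) (mem_support_iff.mp hi)
  rw [hx] at this
  exact mem_range.mpr ((Nat.pow_lt_pow_iff_right hq).mp (this.trans_lt (Nat.lt_pow_self hq)))

end

theorem qary_partitions_le_fib_general (q : ℕ) (hq : 4 ≤ q) (m n : ℕ) (hm : 1 ≤ m) :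
    Set.ncard {x : ℕ →₀ ℕ |
        x.sum (fun i c => c * q ^ i) = m ∧ x.sum (fun _ c => c) ≤ n} ≤ Nat.fib n := by
  have hsubset : {x : ℕ →₀ ℕ | x.sum (fun i c => c * q ^ i) = m ∧ x.sum (fun _ c => c) ≤ n} ⊆
      qaryPartitionsBelow q m m n := fun x ⟨hweight, hdeg⟩ =>
    ⟨support_subset_range_of_weight_pow_eq (by omega) hweight, hweight, hdeg⟩
  have := (Set.encard_le_encard hsubset).trans (encard_qaryPartitionsBelow_le hq (by omega))
  rw [Nat.div_eq_of_lt (Nat.lt_pow_self (by omega)), mul_zero, Nat.sub_zero] at this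
  exact (Set.encard_le_coe_iff_finite_ncard_le.mp this).2

theorem qary_partitions_le_fib (q : ℕ) (hq : 4 ≤ q) (m n : ℕ) (hm : 1 ≤ m) (hn : 1 ≤ n) :
    Set.ncard {x : ℕ →₀ ℕ |
        x.sum (fun i c => c * q ^ i) = m ∧ x.sum (fun _ c => c) ≤ n} ≤ Nat.fib n :=
  qary_partitions_le_fib_general q hq m n hm
end

section
/- For q ∈ {2, 3} and all positive integers m, n, the number of partitions of m into at most n parts, each a power of q, is at most F(2n-1). -/
/-!
Let `N(ℓ, V, β)` be the number of partitions of `V` into at most `β` parts taken from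
`1, q, …, q^ℓ`; such a partition has at least `t = ⌊V / q^ℓ⌋` parts. A partition counted by
`N(ℓ + 1, V, β)` either has no part `q^(ℓ+1)`, or loses one to become a partition counted by
`N(ℓ + 1, V - q^(ℓ+1), β - 1)`. Induction along this recursion gives
`N(ℓ, V, β) ≤ F(2(β - t) + 1) - F(2(β - 2t))` for `t ≤ β`: the step needs only
`⌊V / q^ℓ⌋ ≥ 2⌊V / q^(ℓ+1)⌋`, which holds as `q ≥ 2`, and `F(2k) + F(2k+1) = F(2k+2)`.
For `ℓ = V = m` we have `t = 0`, and the bound is `F(2β + 1) - F(2β) = F(2β - 1)`.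
-/

open Finsupp
open Nat (fib)

lemma Nat.fib_two_mul_lt_fib_two_mul_add_one (k : ℕ) : fib (2 * k) < fib (2 * k + 1) := by
  rcases k with _ | k
  · simp
  · exact Nat.fib_lt_fib_succ (by omega)

lemma Finsupp.weight_le_mul_degree {σ : Type*} {w : σ → ℕ} {c : ℕ} {x : σ →₀ ℕ}
    (h : ∀ i ∈ x.support, w i ≤ c) : weight w x ≤ c * degree x := by
  rw [weight_apply, degree_apply, Finset.mul_sum, Finsupp.sum]
  refine Finset.sum_le_sum fun i hi => ?_
  rw [smul_eq_mul, mul_comm]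
  exact Nat.mul_le_mul_right _ (h i hi)

lemma two_mul_div_pow_succ_le {q : ℕ} (hq : 2 ≤ q) (V ℓ : ℕ) :
    2 * (V / q ^ (ℓ + 1)) ≤ V / q ^ ℓ := by
  rw [pow_succ, ← Nat.div_div_eq_div_mul]
  exact (Nat.mul_le_mul_right _ hq).trans (Nat.mul_div_le _ _)

def fibBound (t β : ℕ) : ℕ :=
  if t ≤ β then fib (2 * (β - t) + 1) - fib (2 * (β - 2 * t)) else 0

lemma fibBound_zero {β : ℕ} (hβ : 1 ≤ β) : fibBound 0 β = fib (2 * β - 1) := by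
  have := Nat.fib_add_one (n := 2 * β) (by omega)
  simp only [fibBound, zero_le, if_true, Nat.sub_zero, mul_zero]
  omega

lemma one_le_fibBound {t β : ℕ} (h : t ≤ β) : 1 ≤ fibBound t β := by
  have := Nat.fib_two_mul_lt_fib_two_mul_add_one (β - t)
  have := Nat.fib_mono (show 2 * (β - 2 * t) ≤ 2 * (β - t) by omega)
  rw [fibBound, if_pos h]
  omega

lemma fibBound_le_fibBound_zero (t β : ℕ) : fibBound t β ≤ fibBound 0 β := by
  rcases Nat.eq_zero_or_pos t with rfl | ht
  · rfl
  by_cases h : t ≤ β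
  · have := Nat.fib_mono (show 2 * (β - t) + 1 ≤ 2 * β - 1 by omega)
    rw [fibBound_zero (by omega), fibBound, if_pos h]
    omega
  · rw [fibBound, if_neg h]
    exact Nat.zero_le _

lemma fibBound_add_fibBound_le {t T β : ℕ} (hT : 2 * (T + 1) ≤ t) :
    fibBound t (β + 1) + fibBound T β ≤ fibBound (T + 1) (β + 1) := by
  unfold fibBound
  rw [show β + 1 - (T + 1) = β - T by omega, show β + 1 - 2 * (T + 1) = β - 1 - 2 * T by omega]
  have h₁ := Nat.fib_mono (show 2 * (β - 2 * T) ≤ 2 * (β - T) + 1 by omega)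
  have h₂ := Nat.fib_mono (show 2 * (β - 1 - 2 * T) ≤ 2 * (β - 2 * T) by omega)
  rcases le_or_gt t (β + 1) with ht | ht
  · have h₃ := Nat.fib_mono (show 2 * (β + 1 - t) + 1 ≤ 2 * (β - 1 - 2 * T) + 1 by omega)
    have h₄ :
        fib (2 * (β - 2 * T)) = fib (2 * (β - 1 - 2 * T)) + fib (2 * (β - 1 - 2 * T) + 1) := by
      rw [← Nat.fib_add_two]; congr 1; omega
    split_ifs <;> omega
  · split_ifs <;> omega

def qaryParts (q ℓ V β : ℕ) : Set (ℕ →₀ ℕ) :=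
  {x | x.support ⊆ Finset.range (ℓ + 1) ∧ weight (q ^ ·) x = V ∧ degree x ≤ β}

section qaryParts

variable {q ℓ V β : ℕ}

lemma qaryParts_finite : (qaryParts q ℓ V β).Finite := by
  refine (Finset.range (ℓ + 1) |>.finsupp fun _ => Finset.range (β + 1)).finite_toSet.subset ?_
  rintro x ⟨hsupp, -, hdeg⟩
  exact Finset.mem_finsupp_iff.2
    ⟨hsupp, fun i _ => Finset.mem_range_succ_iff.2 ((le_degree i x).trans hdeg)⟩

lemma qaryParts_eq_empty (hq : 0 < q) (hβ : β < V / q ^ ℓ) : qaryParts q ℓ V β = ∅ := by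
  refine Set.eq_empty_of_forall_notMem fun x ⟨hsupp, hV, hdeg⟩ => hβ.not_ge ?_
  refine (Nat.div_le_of_le_mul (hV ▸ weight_le_mul_degree fun i hi => ?_)).trans hdeg
  exact Nat.pow_le_pow_right hq (Nat.lt_succ_iff.1 (Finset.mem_range.1 (hsupp hi)))

lemma ncard_qaryParts_zero_le_one : (qaryParts q 0 V β).ncard ≤ 1 := by
  have hsub : qaryParts q 0 V β ⊆ {single 0 V} := by
    rintro x ⟨hsupp, hV, -⟩
    rw [Finset.range_one, support_subset_singleton] at hsupp
    rw [hsupp, weight_single, pow_zero, smul_eq_mul, mul_one] at hV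
    rw [Set.mem_singleton_iff, hsupp, hV]
  exact (Set.ncard_le_ncard hsub).trans (Set.ncard_singleton _).le

lemma mem_qaryParts_of_apply_eq_zero {x : ℕ →₀ ℕ} (hx : x ∈ qaryParts q (ℓ + 1) V β)
    (h0 : x (ℓ + 1) = 0) : x ∈ qaryParts q ℓ V β := by
  refine ⟨fun i hi => Finset.mem_range.2 ?_, hx.2⟩
  have := Finset.mem_range.1 (hx.1 hi)
  have : i ≠ ℓ + 1 := fun h => mem_support_iff.1 hi (h ▸ h0)
  omega

lemma ncard_qaryParts_succ_le_of_lt (hV : V < q ^ (ℓ + 1)) :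
    (qaryParts q (ℓ + 1) V β).ncard ≤ (qaryParts q ℓ V β).ncard := by
  refine Set.ncard_le_ncard (fun x hx => mem_qaryParts_of_apply_eq_zero hx ?_) qaryParts_finite
  by_contra h
  exact ((le_weight_of_ne_zero' _ h).trans_eq hx.2.1).not_gt hV

lemma ncard_qaryParts_succ_add_le :
    (qaryParts q (ℓ + 1) (V + q ^ (ℓ + 1)) (β + 1)).ncard ≤
      (qaryParts q ℓ (V + q ^ (ℓ + 1)) (β + 1)).ncard + (qaryParts q (ℓ + 1) V β).ncard := by
  have hsub : qaryParts q (ℓ + 1) (V + q ^ (ℓ + 1)) (β + 1) ⊆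
      qaryParts q ℓ (V + q ^ (ℓ + 1)) (β + 1) ∪
        (· + single (ℓ + 1) 1) '' qaryParts q (ℓ + 1) V β := by
    intro x hx
    by_cases h0 : x (ℓ + 1) = 0
    · exact Or.inl (mem_qaryParts_of_apply_eq_zero hx h0)
    refine Or.inr ⟨x - single (ℓ + 1) 1, ⟨support_tsub.trans hx.1, ?_, ?_⟩,
      sub_add_single_one_cancel h0⟩
    · have := weight_sub_single_add (w := (q ^ ·)) h0
      rw [hx.2.1] at this
      omega
    · have := congrArg degree (sub_add_single_one_cancel h0)
      rw [map_add, degree_single] at this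
      have := hx.2.2
      omega
  calc _ ≤ _ := Set.ncard_le_ncard hsub (qaryParts_finite.union (qaryParts_finite.image _))
    _ ≤ _ := Set.ncard_union_le _ _
    _ ≤ _ := Nat.add_le_add_left (Set.ncard_image_le qaryParts_finite) _

end qaryParts

theorem ncard_qaryParts_le_fibBound {q : ℕ} (hq : 2 ≤ q) (ℓ V β : ℕ) :
    (qaryParts q ℓ V β).ncard ≤ fibBound (V / q ^ ℓ) β := by
  have hq₀ : 0 < q := by omega
  induction ℓ generalizing V β with
  | zero =>
    obtain hβ | hβ := le_or_gt (V / q ^ 0) β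
    · exact ncard_qaryParts_zero_le_one.trans (one_le_fibBound hβ)
    · simp [qaryParts_eq_empty hq₀ hβ]
  | succ ℓ ih =>
    have of_lt {V β : ℕ} (hV : V < q ^ (ℓ + 1)) :
        (qaryParts q (ℓ + 1) V β).ncard ≤ fibBound (V / q ^ (ℓ + 1)) β := by
      rw [Nat.div_eq_of_lt hV]
      exact (ncard_qaryParts_succ_le_of_lt hV).trans
        ((ih V β).trans (fibBound_le_fibBound_zero _ _))
    induction β generalizing V with
    | zero =>
      obtain hV | hV := lt_or_ge V (q ^ (ℓ + 1))
      · exact of_lt hV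
      · simp [qaryParts_eq_empty hq₀ (Nat.div_pos hV (by positivity))]
    | succ β ihβ =>
      obtain hV | hV := lt_or_ge V (q ^ (ℓ + 1))
      · exact of_lt hV
      obtain ⟨V, rfl⟩ := Nat.exists_eq_add_of_le' hV
      have hT : (V + q ^ (ℓ + 1)) / q ^ (ℓ + 1) = V / q ^ (ℓ + 1) + 1 :=
        Nat.add_div_right _ (by positivity)
      have ht := two_mul_div_pow_succ_le hq (V + q ^ (ℓ + 1)) ℓ
      rw [hT] at ht ⊢
      calc _ ≤ _ := ncard_qaryParts_succ_add_le
        _ ≤ _ := add_le_add (ih _ _) (ihβ _)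
        _ ≤ _ := fibBound_add_fibBound_le ht

theorem qary_partitions_le_fib_small_general (q : ℕ) (hq : q = 2 ∨ q = 3)
    (m n : ℕ) (hn : 1 ≤ n) :
    Set.ncard {x : ℕ →₀ ℕ |
        x.sum (fun i c => c * q ^ i) = m ∧ x.sum (fun _ c => c) ≤ n} ≤
      Nat.fib (2 * n - 1) := by
  have hq₂ : 2 ≤ q := by omega
  have hweight (x : ℕ →₀ ℕ) : x.sum (fun i c => c * q ^ i) = weight (q ^ ·) x := by
    simp [weight_apply]
  have hsub : {x : ℕ →₀ ℕ | x.sum (fun i c => c * q ^ i) = m ∧ x.sum (fun _ c => c) ≤ n} ⊆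
      qaryParts q m m n := by
    rintro x ⟨hV, hdeg⟩
    rw [hweight] at hV
    refine ⟨fun i hi => ?_, hV, hdeg⟩
    have := (le_weight_of_ne_zero' (q ^ ·) (mem_support_iff.1 hi)).trans_eq hV
    exact Finset.mem_range.2 (Nat.lt_succ_of_lt ((Nat.lt_pow_self hq₂).trans_le this))
  calc _ ≤ (qaryParts q m m n).ncard := Set.ncard_le_ncard hsub qaryParts_finite
    _ ≤ fibBound (m / q ^ m) n := ncard_qaryParts_le_fibBound hq₂ m m n
    _ = fib (2 * n - 1) := by rw [Nat.div_eq_of_lt (Nat.lt_pow_self hq₂), fibBound_zero hn]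

theorem qary_partitions_le_fib_small (q : ℕ) (hq : q = 2 ∨ q = 3)
    (m n : ℕ) (hm : 1 ≤ m) (hn : 1 ≤ n) :
    Set.ncard {x : ℕ →₀ ℕ |
        x.sum (fun i c => c * q ^ i) = m ∧ x.sum (fun _ c => c) ≤ n} ≤
      Nat.fib (2 * n - 1) :=
  qary_partitions_le_fib_small_general q hq m n hn
end

section
/- Fix an odd prime p and positive integers m, n with n = 2. The number of solutions (a_1,...,a_r, b_1,...,b_r), with a_i ∈ ℕ and b_j ∈ {0,1}, to the system 2∑ a_i + ∑ b_j = 2 and b_1 + ∑_{i=1}^{r-1}(a_i+b_{i+1})p^i + a_r p^r = m is at most 1. -/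
/-!
Since `2 ∑ aᵢ + ∑ bⱼ = 2`, every entry of `a` and `b` is `0` or `1`, and either `a = 0` and `b`
has a two-element support `T`, or `b = 0` and `a` has a one-element support `U`. In both cases `m`
is the sum of `p ^ n` over an exponent set (`T`, resp. `U + 1`), and a sum of distinct powers of
`p ≥ 2` determines its exponent set (base-`p` digits `0` and `1`). The size of that set separates
the two cases, and a `0`/`1`-valued function is determined by its support.
-/

open Finset

namespace Finsupp

variable {α : Type*} {f g : α →₀ ℕ}

lemma eq_one_of_mem_support_of_le_one (hf : ∀ a, f a ≤ 1) {a : α} (ha : a ∈ f.support) :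
    f a = 1 :=
  le_antisymm (hf a) (Nat.one_le_iff_ne_zero.2 (mem_support_iff.1 ha))

lemma sum_mul_eq_sum_support_of_le_one (hf : ∀ a, f a ≤ 1) (w : α → ℕ) :
    (f.sum fun a c => c * w a) = ∑ a ∈ f.support, w a :=
  Finset.sum_congr rfl fun a ha => by simp only [eq_one_of_mem_support_of_le_one hf ha, one_mul]

lemma degree_eq_card_support_of_le_one (hf : ∀ a, f a ≤ 1) : f.degree = #f.support := by
  have h := sum_mul_eq_sum_support_of_le_one hf 1
  simp only [Pi.one_apply, mul_one, sum_const, smul_eq_mul] at h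
  exact h

lemma eq_of_support_eq_of_le_one (hf : ∀ a, f a ≤ 1) (hg : ∀ a, g a ≤ 1)
    (h : f.support = g.support) : f = g := by
  ext a
  by_cases ha : a ∈ f.support
  · rw [eq_one_of_mem_support_of_le_one hf ha,
      eq_one_of_mem_support_of_le_one hg (h ▸ ha)]
  · rw [notMem_support_iff.1 ha, notMem_support_iff.1 (h ▸ ha)]

end Finsupp

open Finsupp

lemma degree_two_solution_cases {p m : ℕ} {a b : ℕ →₀ ℕ} (hb : ∀ j, b j ≤ 1)
    (hdeg : 2 * a.degree + b.degree = 2)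
    (hval : (a.sum fun i c => c * p ^ (i + 1)) + (b.sum fun j c => c * p ^ j) = m) :
    (a = 0 ∧ #b.support = 2 ∧ m = ∑ n ∈ b.support, p ^ n) ∨
      (b = 0 ∧ (∀ i, a i ≤ 1) ∧ #a.support = 1 ∧
        m = ∑ n ∈ a.support.map (addRightEmbedding 1), p ^ n) := by
  have ha : ∀ i, a i ≤ 1 := fun i => by have := le_degree i a; omega
  rw [sum_mul_eq_sum_support_of_le_one ha, sum_mul_eq_sum_support_of_le_one hb] at hval
  rw [degree_eq_card_support_of_le_one ha, degree_eq_card_support_of_le_one hb] at hdeg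
  obtain hU | hU : #a.support = 0 ∨ #a.support = 1 := by omega
  · have ha0 : a = 0 := support_eq_empty.1 (card_eq_zero.1 hU)
    refine Or.inl ⟨ha0, by omega, ?_⟩
    simpa [ha0] using hval.symm
  · have hb0 : b = 0 := support_eq_empty.1 (card_eq_zero.1 (by omega))
    refine Or.inr ⟨hb0, ha, hU, ?_⟩
    simpa [hb0] using hval.symm

lemma degree_two_solutions_subsingleton {p : ℕ} (hp : 2 ≤ p) (m : ℕ) :
    Set.Subsingleton {ab : (ℕ →₀ ℕ) × (ℕ →₀ ℕ) |
      (∀ j, ab.2 j ≤ 1) ∧ 2 * ab.1.degree + ab.2.degree = 2 ∧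
      (ab.1.sum fun i c => c * p ^ (i + 1)) + (ab.2.sum fun j c => c * p ^ j) = m} := by
  rintro ⟨a, b⟩ ⟨hb, hdeg, hval⟩ ⟨a', b'⟩ ⟨hb', hdeg', hval'⟩
  have hexp : ∀ {s t : Finset ℕ}, m = ∑ n ∈ s, p ^ n → m = ∑ n ∈ t, p ^ n → s = t :=
    fun hs ht => geomSum_injective hp (hs.symm.trans ht)
  rcases degree_two_solution_cases hb hdeg hval with ⟨rfl, hT, hm⟩ | ⟨rfl, ha, hU, hm⟩ <;>
    rcases degree_two_solution_cases hb' hdeg' hval' with ⟨rfl, hT', hm'⟩ | ⟨rfl, ha', hU', hm'⟩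
  · exact congrArg (Prod.mk 0) (eq_of_support_eq_of_le_one hb hb' (hexp hm hm'))
  · have := congrArg card (hexp hm hm')
    rw [card_map] at this
    omega
  · have := congrArg card (hexp hm hm')
    rw [card_map] at this
    omega
  · exact congrArg (·, 0)
      (eq_of_support_eq_of_le_one ha ha' (map_injective _ (hexp hm hm')))

theorem N_degree_two_le_one_general (p : ℕ) (hp : p.Prime) (m : ℕ) :
    Set.ncard {ab : (ℕ →₀ ℕ) × (ℕ →₀ ℕ) |
        (∀ j, ab.2 j ≤ 1) ∧
        2 * ab.1.sum (fun _ c => c) + ab.2.sum (fun _ c => c) = 2 ∧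
        ab.1.sum (fun i c => c * p ^ (i + 1)) + ab.2.sum (fun j c => c * p ^ j) = m} ≤
      1 := by
  have hsub := degree_two_solutions_subsingleton hp.two_le m
  exact (Set.ncard_le_one hsub.finite).2 hsub

theorem N_degree_two_le_one (p : ℕ) (hp : p.Prime) (hodd : Odd p) (m : ℕ) (hm : 1 ≤ m) :
    Set.ncard {ab : (ℕ →₀ ℕ) × (ℕ →₀ ℕ) |
        (∀ j, ab.2 j ≤ 1) ∧
        2 * ab.1.sum (fun _ c => c) + ab.2.sum (fun _ c => c) = 2 ∧
        ab.1.sum (fun i c => c * p ^ (i + 1)) + ab.2.sum (fun j c => c * p ^ j) = m} ≤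
      1 :=
  N_degree_two_le_one_general p hp m
end
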